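/- For every real w > 1, (1 - w·β(w/2)) / (w² - 1) = ∫_0^∞ e^{-wx} · ( sinh(x) - 2·sinh(x)·(π/4 - arctan(e^{-x})) + e^{-x} - 1 ) dx, where β(z) := ∫_0^∞ e^{-zs}/(1 + e^{-s}) ds for z > 0. -/

import Mathlib

/-- The beta function via its Laplace-integral representation,
`β(z) = ∫_0^∞ e^{-zs}/(1 + e^{-s}) ds` for `z > 0`. -/
noncomputable def betaFn (z : ℝ) : ℝ :=
  ∫ s in Set.Ioi (0 : ℝ), Real.exp (-z * s) / (1 + Real.exp (-s))

/-!
Let `f` be the integrand on the right, `L` the Laplace transform and `sech² = tanh'`.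
Since `π/4 - arctan (e^{-x})` is half the Gudermannian function, its derivative is
`1 / (2 cosh x)`; hence `f(0) = f'(0) = 0` and `f'' = f - sech²`. Integrating by parts twice gives
`(w² - 1) L f = -L sech²`. On the other side, substituting `s = 2t` in `β(w/2)` gives
`β(w/2) = L (1 + tanh)`, and one more integration by parts gives `w β(w/2) - 1 = L sech²`.
-/

open Real MeasureTheory Set Filter Topology Asymptotics

noncomputable def laplace (f : ℝ → ℝ) (w : ℝ) : ℝ :=
  ∫ x in Ioi 0, exp (-w * x) * f x

section Laplace

variable {f f' g : ℝ → ℝ} {a w : ℝ}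

lemma isBigO_exp_neg_mul_mul (hf : f =O[atTop] fun x => exp (a * x)) :
    (fun x => exp (-w * x) * f x) =O[atTop] fun x => exp (-(w - a) * x) :=
  ((isBigO_refl (fun x => exp (-w * x)) atTop).mul hf).congr_right fun x => by
    rw [← exp_add]; ring_nf

lemma integrableOn_exp_neg_mul_mul (haw : a < w) (hc : Continuous f)
    (hf : f =O[atTop] fun x => exp (a * x)) :
    IntegrableOn (fun x => exp (-w * x) * f x) (Ioi 0) :=
  integrable_of_isBigO_exp_neg (sub_pos.2 haw) (by fun_prop) (isBigO_exp_neg_mul_mul hf)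

lemma tendsto_exp_neg_mul_mul (haw : a < w) (hf : f =O[atTop] fun x => exp (a * x)) :
    Tendsto (fun x => exp (-w * x) * f x) atTop (𝓝 0) := by
  refine (isBigO_exp_neg_mul_mul hf).trans_tendsto ?_
  exact tendsto_exp_comp_nhds_zero.2 <|
    tendsto_id.const_mul_atTop_of_neg (neg_lt_zero.2 (sub_pos.2 haw))

lemma laplace_sub (haw : a < w) (hcf : Continuous f) (hcg : Continuous g)
    (hf : f =O[atTop] fun x => exp (a * x)) (hg : g =O[atTop] fun x => exp (a * x)) :
    laplace (fun x => f x - g x) w = laplace f w - laplace g w := by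
  simp only [laplace, mul_sub]
  exact integral_sub (integrableOn_exp_neg_mul_mul haw hcf hf)
    (integrableOn_exp_neg_mul_mul haw hcg hg)

theorem laplace_deriv (haw : a < w) (hderiv : ∀ x, HasDerivAt f (f' x) x) (hc' : Continuous f')
    (hf : f =O[atTop] fun x => exp (a * x)) (hf' : f' =O[atTop] fun x => exp (a * x)) :
    laplace f' w = w * laplace f w - f 0 := by
  have hc : Continuous f := continuous_iff_continuousAt.2 fun x => (hderiv x).continuousAt
  have hprod : ∀ x ∈ Ici (0 : ℝ), HasDerivAt (fun x => exp (-w * x) * f x)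
      (-w * (exp (-w * x) * f x) + exp (-w * x) * f' x) x := fun x _ =>
    ((((hasDerivAt_id x).const_mul (-w)).exp).mul (hderiv x)).congr_deriv
      (by simp only [id, mul_one]; ring)
  have hint := integrableOn_exp_neg_mul_mul haw hc hf
  have hint' := integrableOn_exp_neg_mul_mul haw hc' hf'
  have hibp := integral_Ioi_of_hasDerivAt_of_tendsto' hprod ((hint.const_mul (-w)).add hint')
    (tendsto_exp_neg_mul_mul haw hf)
  rw [integral_add (hint.const_mul _) hint', integral_const_mul] at hibp
  simp only [mul_zero, exp_zero, one_mul, zero_sub] at hibp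
  simp only [laplace]
  linarith

end Laplace

lemma hasDerivAt_tanh (x : ℝ) : HasDerivAt tanh (1 / cosh x ^ 2) x := by
  have h := (hasDerivAt_sinh x).div (hasDerivAt_cosh x) (cosh_pos x).ne'
  rw [← sq, ← sq, cosh_sq_sub_sinh_sq] at h
  rwa [show tanh = sinh / cosh from funext fun y => tanh_eq_sinh_div_cosh y]

lemma hasDerivAt_pi_div_four_sub_arctan_exp_neg (x : ℝ) :
    HasDerivAt (fun x => π / 4 - arctan (exp (-x))) (1 / (2 * cosh x)) x := by
  refine ((((hasDerivAt_neg x).exp).arctan).const_sub (π / 4)).congr_deriv ?_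
  have : exp x * exp (-x) = 1 := by rw [← exp_add, add_neg_cancel, exp_zero]
  rw [cosh_eq]
  field_simp
  linear_combination this

noncomputable def khintchineKernel (x : ℝ) : ℝ :=
  sinh x - 2 * sinh x * (π / 4 - arctan (exp (-x))) + exp (-x) - 1

noncomputable def khintchineKernelDeriv (x : ℝ) : ℝ :=
  cosh x - 2 * cosh x * (π / 4 - arctan (exp (-x))) - tanh x - exp (-x)

lemma hasDerivAt_khintchineKernel (x : ℝ) :
    HasDerivAt khintchineKernel (khintchineKernelDeriv x) x := by
  have h := ((((hasDerivAt_sinh x).sub (((hasDerivAt_sinh x).const_mul 2).mul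
    (hasDerivAt_pi_div_four_sub_arctan_exp_neg x))).add (hasDerivAt_neg x).exp).sub_const 1)
  refine h.congr_deriv ?_
  rw [khintchineKernelDeriv, tanh_eq_sinh_div_cosh]
  field_simp
  ring

lemma hasDerivAt_khintchineKernelDeriv (x : ℝ) :
    HasDerivAt khintchineKernelDeriv (khintchineKernel x - 1 / cosh x ^ 2) x := by
  have h := ((((hasDerivAt_cosh x).sub (((hasDerivAt_cosh x).const_mul 2).mul
    (hasDerivAt_pi_div_four_sub_arctan_exp_neg x))).sub (hasDerivAt_tanh x)).sub
    (hasDerivAt_neg x).exp)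
  refine h.congr_deriv ?_
  rw [khintchineKernel]
  field_simp
  ring

lemma continuous_khintchineKernel : Continuous khintchineKernel :=
  continuous_iff_continuousAt.2 fun x => (hasDerivAt_khintchineKernel x).continuousAt

lemma continuous_khintchineKernelDeriv : Continuous khintchineKernelDeriv :=
  continuous_iff_continuousAt.2 fun x => (hasDerivAt_khintchineKernelDeriv x).continuousAt

lemma continuous_inv_cosh_sq : Continuous fun x => 1 / cosh x ^ 2 :=
  continuous_const.div (by fun_prop) fun x => (pow_pos (cosh_pos x) 2).ne'

lemma one_add_tanh (x : ℝ) : 1 + tanh x = 2 / (1 + exp (-(2 * x))) := by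
  have h1 : exp x * exp (-x) = 1 := by rw [← exp_add, add_neg_cancel, exp_zero]
  have h2 : exp (-(2 * x)) = exp (-x) ^ 2 := by rw [← exp_nat_mul]; ring_nf
  rw [tanh_eq_sinh_div_cosh, sinh_eq, cosh_eq, h2]
  field_simp
  linear_combination 2 * exp (-x) * h1

lemma betaFn_half (w : ℝ) : betaFn (w / 2) = laplace (fun t => 1 + tanh t) w := by
  have h := integral_comp_mul_left_Ioi (fun s => exp (-(w / 2) * s) / (1 + exp (-s))) 0 two_pos
  rw [mul_zero, smul_eq_mul, eq_inv_mul_iff_mul_eq₀ two_ne_zero, ← integral_const_mul] at h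
  rw [betaFn, laplace, ← h]
  congr 1 with t
  rw [one_add_tanh]
  ring_nf

lemma Asymptotics.IsBigO.mul_isBigO_one {α : Type*} {l : Filter α} {f g k : α → ℝ}
    (hf : f =O[l] k) (hg : g =O[l] fun _ => (1 : ℝ)) : (fun x => f x * g x) =O[l] k := by
  simpa using hf.mul hg

lemma isBigO_one_exp : (fun _ => (1 : ℝ)) =O[atTop] exp :=
  isBigO_one_exp_comp.2 tendsto_id.isBoundedUnder_ge_atTop

lemma isBigO_exp_neg_exp : (fun x => exp (-x)) =O[atTop] exp :=
  (tendsto_exp_neg_atTop_nhds_zero.isBigO_one ℝ).trans isBigO_one_exp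

lemma isBigO_sinh_exp : sinh =O[atTop] exp :=
  (((isBigO_refl exp atTop).sub isBigO_exp_neg_exp).const_mul_left (1 / 2)).congr_left
    fun x => by rw [sinh_eq]; ring

lemma isBigO_cosh_exp : cosh =O[atTop] exp :=
  (((isBigO_refl exp atTop).add isBigO_exp_neg_exp).const_mul_left (1 / 2)).congr_left
    fun x => by rw [cosh_eq]; ring

lemma isBigO_tanh_one : tanh =O[atTop] fun _ => (1 : ℝ) :=
  .of_bound 1 <| .of_forall fun x => by simpa using (abs_tanh_lt_one x).le

lemma isBigO_inv_cosh_sq_one : (fun x => 1 / cosh x ^ 2) =O[atTop] fun _ => (1 : ℝ) :=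
  .of_bound 1 <| .of_forall fun x => by
    rw [norm_one, mul_one, norm_div, norm_one, norm_pow, norm_of_nonneg (cosh_pos x).le]
    exact div_le_one_of_le₀ (one_le_pow₀ (one_le_cosh x)) (by positivity)

lemma isBigO_one_sub_two_mul_pi_div_four_sub_arctan_exp_neg :
    (fun x => 1 - 2 * (π / 4 - arctan (exp (-x)))) =O[atTop] fun _ => (1 : ℝ) :=
  ((((continuous_arctan.tendsto 0).comp tendsto_exp_neg_atTop_nhds_zero).const_sub
    (π / 4)).const_mul 2 |>.const_sub 1).isBigO_one ℝ

lemma isBigO_khintchineKernel : khintchineKernel =O[atTop] exp :=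
  ((isBigO_sinh_exp.mul_isBigO_one isBigO_one_sub_two_mul_pi_div_four_sub_arctan_exp_neg).add
    (isBigO_exp_neg_exp.sub isBigO_one_exp)).congr_left fun x => by
      rw [khintchineKernel]; ring

lemma isBigO_khintchineKernelDeriv : khintchineKernelDeriv =O[atTop] exp :=
  ((isBigO_cosh_exp.mul_isBigO_one isBigO_one_sub_two_mul_pi_div_four_sub_arctan_exp_neg).sub
    ((isBigO_tanh_one.trans isBigO_one_exp).add isBigO_exp_neg_exp)).congr_left fun x => by
      rw [khintchineKernelDeriv]; ring

/-- For every `w > 1`, `(1 - w β(w/2))/(w² - 1)` is the Laplace transform at `w` of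
`sinh(x) - 2 sinh(x)(π/4 - arctan(e^{-x})) + e^{-x} - 1`. -/
theorem laplace_cosh_khintchine_charFun (w : ℝ) (hw : 1 < w) :
    (1 - w * betaFn (w / 2)) / (w ^ 2 - 1) =
      ∫ x in Set.Ioi (0 : ℝ), Real.exp (-w * x) *
        (Real.sinh x - 2 * Real.sinh x * (Real.pi / 4 - Real.arctan (Real.exp (-x)))
          + Real.exp (-x) - 1) := by
  have growth {g : ℝ → ℝ} (h : g =O[atTop] exp) : g =O[atTop] fun x => exp (1 * x) := by
    simpa using h
  have hsech := isBigO_inv_cosh_sq_one.trans isBigO_one_exp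
  have hK := laplace_deriv hw hasDerivAt_khintchineKernel continuous_khintchineKernelDeriv
    (growth isBigO_khintchineKernel) (growth isBigO_khintchineKernelDeriv)
  have hK' := laplace_deriv hw hasDerivAt_khintchineKernelDeriv
    (continuous_khintchineKernel.sub continuous_inv_cosh_sq) (growth isBigO_khintchineKernelDeriv)
    (growth (isBigO_khintchineKernel.sub hsech))
  have hT := laplace_deriv hw (fun x => (hasDerivAt_tanh x).const_add 1) continuous_inv_cosh_sq
    (growth ((isBigO_refl _ _).add isBigO_tanh_one |>.trans isBigO_one_exp)) (growth hsech)
  rw [laplace_sub hw continuous_khintchineKernel continuous_inv_cosh_sq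
    (growth isBigO_khintchineKernel) (growth hsech)] at hK'
  have hK0 : khintchineKernel 0 = 0 := by simp [khintchineKernel]
  have hK'0 : khintchineKernelDeriv 0 = 0 := by simp [khintchineKernelDeriv, arctan_one]
  rw [betaFn_half, div_eq_iff (by nlinarith)]
  change _ = laplace khintchineKernel w * _
  simp only [hK0, hK'0, tanh_zero] at hK hK' hT
  linear_combination hT + hK' + w * hK
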